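/- Let G(x) = ∏_{i=1}^k g(x_i) be the k-variate Bentkus mollifier, where g is the standard Gaussian CDF. If x ∈ ℝ^k has more than 3·log₂ k coordinates with x_i ≤ 0, then Σ_{i=1}^k |∂_i G(x)| ≤ C/k² for a universal constant C. -/
import Mathlib

open Real MeasureTheory

/-- The standard Gaussian CDF. -/
noncomputable def gcdf (x : ℝ) : ℝ :=
  ∫ t in Set.Iio x, (1 / Real.sqrt (2 * Real.pi)) * Real.exp (-t ^ 2 / 2)

/-- The k-variate Bentkus mollifier `G(x) = ∏ᵢ g(xᵢ)`. -/
noncomputable def bentkusG (k : ℕ) (x : Fin k → ℝ) : ℝ := ∏ i, gcdf (x i)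

/-- The `i`-th partial derivative of `G` at `x`. -/
noncomputable def bentkusPartial (k : ℕ) (i : Fin k) (x : Fin k → ℝ) : ℝ :=
  deriv (fun t => bentkusG k (Function.update x i t)) (x i)

/-- The standard Gaussian density. -/
noncomputable def gpdf (t : ℝ) : ℝ := (1 / Real.sqrt (2 * Real.pi)) * Real.exp (-t ^ 2 / 2)

lemma gpdf_cont : Continuous gpdf := by
  unfold gpdf; continuity

lemma gpdf_nonneg (t : ℝ) : 0 ≤ gpdf t := by
  unfold gpdf; positivity

lemma sqrt_two_pi_pos : 0 < Real.sqrt (2 * Real.pi) :=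
  Real.sqrt_pos.mpr (by positivity)

lemma gpdf_le_one (t : ℝ) : gpdf t ≤ 1 := by
  unfold gpdf
  have h1 : Real.exp (-t ^ 2 / 2) ≤ 1 := by
    rw [Real.exp_le_one_iff]
    nlinarith [sq_nonneg t]
  have h2 : (1 : ℝ) ≤ Real.sqrt (2 * Real.pi) := by
    rw [show (1:ℝ) = Real.sqrt 1 by simp]
    exact Real.sqrt_le_sqrt (by nlinarith [Real.pi_gt_three])
  calc (1 / Real.sqrt (2 * Real.pi)) * Real.exp (-t ^ 2 / 2)
      ≤ (1 / Real.sqrt (2 * Real.pi)) * 1 := by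
        apply mul_le_mul_of_nonneg_left h1 (by positivity)
    _ ≤ 1 := by
        rw [mul_one]
        exact div_le_one_of_le₀ h2 (by positivity)

lemma gpdf_integrable : Integrable gpdf := by
  have h : Integrable (fun t : ℝ => Real.exp (-(1/2) * t ^ 2)) :=
    integrable_exp_neg_mul_sq (by norm_num)
  have h2 : Integrable (fun t : ℝ => Real.exp (-t ^ 2 / 2)) := by
    convert h using 2 with t
    ring_nf
  exact h2.const_mul _

lemma gpdf_integral : ∫ t : ℝ, gpdf t = 1 := by
  unfold gpdf
  rw [MeasureTheory.integral_const_mul]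
  have h : ∫ t : ℝ, Real.exp (-t ^ 2 / 2) = Real.sqrt (2 * Real.pi) := by
    have := integral_gaussian (1/2)
    rw [show Real.pi / (1/2) = 2 * Real.pi by ring] at this
    rw [← this]
    congr 1 with t
    ring_nf
  rw [h, one_div, inv_mul_cancel₀ sqrt_two_pi_pos.ne']

lemma gcdf_eq (x : ℝ) : gcdf x = ∫ t in Set.Iio x, gpdf t := rfl

lemma gcdf_nonneg (x : ℝ) : 0 ≤ gcdf x := by
  rw [gcdf_eq]
  exact MeasureTheory.setIntegral_nonneg measurableSet_Iio (fun t _ => gpdf_nonneg t)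

lemma gcdf_le_one (x : ℝ) : gcdf x ≤ 1 := by
  rw [gcdf_eq, ← gpdf_integral]
  exact MeasureTheory.setIntegral_le_integral gpdf_integrable
    (Filter.Eventually.of_forall gpdf_nonneg)

lemma gcdf_zero : gcdf 0 = 1 / 2 := by
  rw [gcdf_eq, ← MeasureTheory.integral_Iic_eq_integral_Iio]
  have hsym : (∫ t in Set.Ioi (0:ℝ), gpdf (-t)) = ∫ t in Set.Iic (-(0:ℝ)), gpdf t :=
    integral_comp_neg_Ioi 0 gpdf
  have heven : ∀ t : ℝ, gpdf (-t) = gpdf t := by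
    intro t; unfold gpdf; ring_nf
  simp only [heven, neg_zero] at hsym
  rw [← hsym]
  unfold gpdf
  rw [MeasureTheory.integral_const_mul]
  have h : ∫ t in Set.Ioi (0:ℝ), Real.exp (-t ^ 2 / 2) = Real.sqrt (2 * Real.pi) / 2 := by
    have := integral_gaussian_Ioi (1/2)
    rw [show Real.pi / (1/2) = 2 * Real.pi by ring] at this
    rw [← this]
    apply MeasureTheory.setIntegral_congr_fun measurableSet_Ioi
    intro t _
    ring_nf
  rw [h]
  field_simp

lemma gcdf_mono : Monotone gcdf := by
  intro a b hab
  rw [gcdf_eq, gcdf_eq]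
  apply MeasureTheory.setIntegral_mono_set gpdf_integrable.integrableOn
    (Filter.Eventually.of_forall gpdf_nonneg)
  exact HasSubset.Subset.eventuallyLE (Set.Iio_subset_Iio hab)

lemma gcdf_le_half {x : ℝ} (hx : x ≤ 0) : gcdf x ≤ 1 / 2 := by
  rw [← gcdf_zero]; exact gcdf_mono hx

lemma gcdf_hasDerivAt (a : ℝ) : HasDerivAt gcdf (gpdf a) a := by
  have key : ∀ x : ℝ, gcdf x = gcdf 0 + ∫ t in (0:ℝ)..x, gpdf t := by
    intro x
    have := intervalIntegral.integral_Iic_sub_Iic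
      (gpdf_integrable.integrableOn (s := Set.Iic 0))
      (gpdf_integrable.integrableOn (s := Set.Iic x))
    rw [MeasureTheory.integral_Iic_eq_integral_Iio, MeasureTheory.integral_Iic_eq_integral_Iio,
      ← gcdf_eq, ← gcdf_eq] at this
    linarith
  have h1 : HasDerivAt (fun u => gcdf 0 + ∫ t in (0:ℝ)..u, gpdf t) (gpdf a) a :=
    ((gpdf_cont.integral_hasStrictDerivAt 0 a).hasDerivAt).const_add _
  exact (funext key : gcdf = _) ▸ h1

lemma bentkusPartial_eq (k : ℕ) (i : Fin k) (x : Fin k → ℝ) :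
    bentkusPartial k i x = gpdf (x i) * ∏ j ∈ Finset.univ.erase i, gcdf (x j) := by
  have hfun : (fun t => bentkusG k (Function.update x i t)) =
      fun t => gcdf t * ∏ j ∈ Finset.univ.erase i, gcdf (x j) := by
    funext t
    unfold bentkusG
    rw [← Finset.mul_prod_erase _ _ (Finset.mem_univ i)]
    rw [Function.update_self]
    congr 1
    apply Finset.prod_congr rfl
    intro j hj
    rw [Function.update_of_ne (Finset.ne_of_mem_erase hj)]
  unfold bentkusPartial
  rw [hfun]
  exact ((gcdf_hasDerivAt (x i)).mul_const _).deriv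

/-- If more than `3·log₂ k` coordinates of `x` are nonpositive, then
`Σᵢ |∂ᵢG(x)| ≤ C/k²` for a universal constant `C`. -/
theorem bentkus_first_derivative_small_many_negative :
    ∃ C : ℝ, 0 < C ∧ ∀ (k : ℕ) (x : Fin k → ℝ),
      3 * Real.logb 2 k < ((Finset.univ.filter fun i => x i ≤ 0).card : ℝ) →
      ∑ i, |bentkusPartial k i x| ≤ C / (k : ℝ) ^ 2 := by
  refine ⟨2, by norm_num, fun k x hm => ?_⟩
  set S := Finset.univ.filter fun i => x i ≤ 0 with hS
  set m := S.card with hmdef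
  rcases Nat.eq_zero_or_pos k with hk | hk
  · subst hk
    exfalso
    have h0 : m = 0 := by
      simp [hmdef, hS]
    rw [h0] at hm
    simp [Real.logb] at hm
  -- per-term bound
  have hterm : ∀ i : Fin k, |bentkusPartial k i x| ≤ (1/2 : ℝ) ^ (m - 1) := by
    intro i
    rw [bentkusPartial_eq]
    have hP0 : (0:ℝ) ≤ ∏ j ∈ Finset.univ.erase i, gcdf (x j) :=
      Finset.prod_nonneg fun j _ => gcdf_nonneg _
    rw [abs_of_nonneg (mul_nonneg (gpdf_nonneg _) hP0)]
    have hstep1 : ∏ j ∈ Finset.univ.erase i, gcdf (x j) ≤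
        ∏ j ∈ S.erase i, gcdf (x j) := by
      have hsub : S.erase i ⊆ Finset.univ.erase i :=
        Finset.erase_subset_erase i (Finset.subset_univ S)
      rw [← Finset.prod_sdiff hsub]
      have h1 : ∏ j ∈ (Finset.univ.erase i) \ (S.erase i), gcdf (x j) ≤ 1 :=
        Finset.prod_le_one (fun j _ => gcdf_nonneg _) (fun j _ => gcdf_le_one _)
      nlinarith [Finset.prod_nonneg (fun j (_ : j ∈ S.erase i) => gcdf_nonneg (x j))]
    have hstep2 : ∏ j ∈ S.erase i, gcdf (x j) ≤ (1/2 : ℝ) ^ (S.erase i).card := by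
      rw [← Finset.prod_const]
      apply Finset.prod_le_prod (fun j _ => gcdf_nonneg _)
      intro j hj
      have : x j ≤ 0 := by
        have := Finset.mem_of_mem_erase hj
        rw [hS] at this
        exact (Finset.mem_filter.mp this).2
      exact gcdf_le_half this
    have hstep3 : ((1:ℝ)/2) ^ (S.erase i).card ≤ (1/2 : ℝ) ^ (m - 1) := by
      apply pow_le_pow_of_le_one (by norm_num) (by norm_num)
      exact Finset.pred_card_le_card_erase
    calc gpdf (x i) * ∏ j ∈ Finset.univ.erase i, gcdf (x j)
        ≤ 1 * ∏ j ∈ Finset.univ.erase i, gcdf (x j) :=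
          mul_le_mul_of_nonneg_right (gpdf_le_one _) hP0
      _ = ∏ j ∈ Finset.univ.erase i, gcdf (x j) := one_mul _
      _ ≤ (1/2 : ℝ) ^ (m - 1) := le_trans hstep1 (le_trans hstep2 hstep3)
  have hsum : ∑ i, |bentkusPartial k i x| ≤ (k : ℝ) * (1/2 : ℝ) ^ (m - 1) := by
    calc ∑ i, |bentkusPartial k i x| ≤ ∑ _i : Fin k, (1/2 : ℝ) ^ (m - 1) :=
          Finset.sum_le_sum fun i _ => hterm i
      _ = (k : ℝ) * (1/2 : ℝ) ^ (m - 1) := by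
          rw [Finset.sum_const, Finset.card_univ, Fintype.card_fin, nsmul_eq_mul]
  refine le_trans hsum ?_
  -- now the arithmetic
  have hk0 : (0:ℝ) < k := Nat.cast_pos.mpr hk
  have hm1 : 1 ≤ m := by
    by_contra h
    push_neg at h
    interval_cases m
    have : (0:ℝ) ≤ 3 * Real.logb 2 k := by
      apply mul_nonneg (by norm_num)
      apply Real.logb_nonneg (by norm_num)
      exact_mod_cast hk
    simp at hm
    linarith
  have hk3 : (k:ℝ) ^ 3 ≤ (2:ℝ) ^ m := by
    have h1 : (k:ℝ) ^ (3:ℕ) = (2:ℝ) ^ (3 * Real.logb 2 k) := by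
      rw [mul_comm, Real.rpow_mul (by norm_num), Real.rpow_logb (by norm_num) (by norm_num) hk0,
        ← Real.rpow_natCast (k:ℝ) 3]
      norm_num
    have h2 : (2:ℝ) ^ (3 * Real.logb 2 k) ≤ (2:ℝ) ^ (m:ℝ) :=
      Real.rpow_le_rpow_of_exponent_le (by norm_num) hm.le
    rw [Real.rpow_natCast] at h2
    exact h1 ▸ h2
  have h2m : (2:ℝ) ^ m = 2 * (2:ℝ) ^ (m - 1) := by
    rw [← pow_succ']
    congr 1
    omega
  have hpow : ((1:ℝ)/2) ^ (m-1) = ((2:ℝ) ^ (m-1))⁻¹ := by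
    rw [one_div, inv_pow]
  rw [hpow, ← div_eq_mul_inv, div_le_div_iff₀ (by positivity) (by positivity)]
  calc (k:ℝ) * (k:ℝ)^2 = (k:ℝ)^3 := by ring
    _ ≤ (2:ℝ) ^ m := hk3
    _ = 2 * (2:ℝ) ^ (m-1) := h2m
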